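/- Let n ≥ 3 be an integer with Fibonacci representation w, i.e., n = (w)_Fib. Then exactly one of the following holds: w = 101α for some binary word α, or w = 1001α for some binary word α, or w = 100α where α is empty or begins with 0. In each of the three cases, SB[n] = (1α)_Fib, where SB[n] is the length of the longest short border of the prefix of length n of the infinite Fibonacci word. -/

import Mathlib

open List Filter

/-- The Zimin pattern `Z_k` as a word over variables `0, 1, ..., k-1`
(`Z_0` is empty, `Z_{k+1} = Z_k · x_{k+1} · Z_k`). -/
def ziminWord : ℕ → List ℕ
  | 0 => []
  | k + 1 => ziminWord k ++ k :: ziminWord k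

/-- `w` is the image of the Zimin pattern `Z_k` under a non-erasing morphism. -/
def IsZiminImage {α : Type*} (k : ℕ) (w : List α) : Prop :=
  ∃ h : ℕ → List α, (∀ i, h i ≠ []) ∧ w = (ziminWord k).flatMap h

/-- The Zimin type of `w`: the maximum `k` such that `w` is an image of `Z_k`
under a non-erasing morphism (0 for the empty word). -/
noncomputable def ziminType {α : Type*} (w : List α) : ℕ :=
  sSup {k | IsZiminImage k w}

/-- The Zimin pattern `Z_k` embeds in `w`: some factor of `w` is an image of `Z_k`. -/
def ziminEmbeds {α : Type*} (k : ℕ) (w : List α) : Prop :=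
  ∃ u : List α, u <:+: w ∧ IsZiminImage k u

/-- Length of the longest border (proper prefix that is also a proper suffix) of `w`. -/
noncomputable def bordLen {α : Type*} (w : List α) : ℕ :=
  sSup {j | w.take j <:+ w ∧ j < w.length}

/-- Length of the longest short border (border of length `< |w|/2`) of `w`. -/
noncomputable def shortBordLen {α : Type*} (w : List α) : ℕ :=
  sSup {j | w.take j <:+ w ∧ 2 * j < w.length}

/-- The longest border of `w`. -/
noncomputable def bord {α : Type*} (w : List α) : List α := w.take (bordLen w)

/-- The longest short border of `w`. -/
noncomputable def shortBord {α : Type*} (w : List α) : List α := w.take (shortBordLen w)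

/-- The Fibonacci words over `Bool` (`a = false`, `b = true`), with
`fibWord 0 = F_0 = a`, `fibWord 1 = F_1 = F_0 F_{-1} = ab`, `F_{n} = F_{n-1} F_{n-2}`. -/
def fibWord : ℕ → List Bool
  | 0 => [false]
  | 1 => [false, true]
  | n + 2 => fibWord (n + 1) ++ fibWord n

/-- The Fibonacci numbers `Φ_n = |F_n|` (`Φ_0 = 1, Φ_1 = 2, Φ_2 = 3, ...`). -/
def Phi (n : ℕ) : ℕ := (fibWord n).length

/-- The infinite Fibonacci word `F_∞` (0-indexed letters). -/
def fibInf (i : ℕ) : Bool := (fibWord (i + 2)).getD i false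

/-- The prefix `F_∞[1..n]` of the infinite Fibonacci word. -/
def fibPrefix (n : ℕ) : List Bool := (List.range n).map fibInf


/-- The value `(w)_Fib` of a binary word in the Fibonacci numeration system
(most significant digit first; the last digit has weight `Φ_0`). -/
def fibVal : List Bool → ℕ
  | [] => 0
  | d :: rest => (if d then Phi rest.length else 0) + fibVal rest

/-- `w` is the Fibonacci representation of `n`: it starts with `1`, has no two
adjacent `1`s, and `(w)_Fib = n`. -/
def IsFibRep (n : ℕ) (w : List Bool) : Prop :=
  w.head? = some true ∧ w.Chain' (fun a b => ¬(a = true ∧ b = true)) ∧ fibVal w = n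

/-!
Write `s = (1α)_Fib` and `L = |α|`; in each of the three cases `n = Φ_m + s` with
`Φ_L ≤ s < Φ_{L+1}` and `L < m ≤ L + 3`. A border of length `j` of `F_∞[1..n]` is a period
`n - j`. Since `F_{m+1}F_m` and `F_mF_{m+1}` differ only in their last two letters, `Φ_m` is a
period of `F_∞[1..Φ_{m+2} - 2]`, so `s` is a short border. A longer short border would give a
period `p` of `F_∞[1..n]` with `n < 2p` and `p < Φ_m`; let `Φ_h ≤ p < Φ_{h+1}`. If `p = Φ_h`,
the period fails at the penultimate letter of `F_{h+2}`, because the penultimate letters of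
consecutive `F_k` alternate. Otherwise `p - Φ_h < Φ_{h-1}` fails early, and the period `Φ_h`
carries that failure over to `p` before position `Φ_{h+1} + Φ_{h-2}`. As `h < m` and
`h - 2 ≤ L`, the failure lies inside `F_∞[1..n]`, except for `p = Φ_{m-1}`, which `n < 2p`
rules out.
-/

lemma Phi_add_two (n : ℕ) : Phi (n + 2) = Phi (n + 1) + Phi n := by
  simp [Phi, fibWord]

lemma Phi_eq_fib : ∀ n, Phi n = Nat.fib (n + 2)
  | 0 => rfl
  | 1 => rfl
  | n + 2 => by
    rw [Phi_add_two, Phi_eq_fib n, Phi_eq_fib (n + 1), Nat.fib_add_two (n := n + 2), add_comm]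

lemma Phi_strictMono : StrictMono Phi := by
  simpa only [funext Phi_eq_fib] using Nat.fib_add_two_strictMono

lemma Phi_pos (n : ℕ) : 0 < Phi n := by
  rw [Phi_eq_fib]
  exact Nat.fib_pos.mpr (by omega)

lemma two_le_Phi_add_one (n : ℕ) : 2 ≤ Phi (n + 1) :=
  (Phi_strictMono.monotone (Nat.le_add_left 1 n) :)

-- At `n = 0` this reads `Φ_0 + Φ_0 = Φ_1`, thanks to truncated subtraction.
lemma Phi_sub_one_add (n : ℕ) : Phi (n - 1) + Phi n = Phi (n + 1) := by
  cases n with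
  | zero => rfl
  | succ n => rw [Phi_add_two, Nat.add_sub_cancel, add_comm]

lemma two_mul_Phi_le (n : ℕ) : 2 * Phi n ≤ Phi (n + 1) + Phi (n - 2) := by
  cases n with
  | zero => decide
  | succ n =>
    have := Phi_sub_one_add n
    rw [Phi_add_two, show n + 1 - 2 = n - 1 by omega]
    omega

lemma exists_Phi_le_lt_Phi_add_one {p : ℕ} (hp : 0 < p) :
    ∃ h, Phi h ≤ p ∧ p < Phi (h + 1) := by
  have h2 : 2 ≤ Nat.greatestFib p := by simpa using Nat.one_le_iff_ne_zero.mpr hp.ne'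
  refine ⟨Nat.greatestFib p - 2, ?_, ?_⟩ <;> rw [Phi_eq_fib]
  · rw [Nat.sub_add_cancel h2]
    exact Nat.fib_greatestFib_le p
  · rw [show Nat.greatestFib p - 2 + 1 + 2 = Nat.greatestFib p + 1 by omega]
    exact Nat.lt_fib_greatestFib_add_one p

lemma length_fibWord (n : ℕ) : (fibWord n).length = Phi n := rfl

lemma fibWord_prefix_of_le {a b : ℕ} (h : a ≤ b) : fibWord a <+: fibWord b := by
  induction b, h using Nat.le_induction with
  | base => exact List.prefix_refl _
  | succ b _ ih =>
    refine ih.trans ?_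
    cases b with
    | zero => exact ⟨[true], rfl⟩
    | succ b => exact ⟨fibWord b, rfl⟩

lemma fibInf_eq_getD_fibWord {k i : ℕ} (h : i < Phi k) :
    fibInf i = (fibWord k).getD i false := by
  have hi : i < Phi (i + 2) := lt_of_lt_of_le (by omega) Phi_strictMono.le_apply
  obtain ⟨t, ht⟩ | ⟨t, ht⟩ :=
    (Nat.le_total k (i + 2)).imp fibWord_prefix_of_le fibWord_prefix_of_le
  · rw [fibInf, ← ht, List.getD_append _ _ _ _ h]
  · rw [fibInf, ← ht, List.getD_append _ _ _ _ hi]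

lemma fibInf_Phi_add_one_add {k i : ℕ} (h : i < Phi k) :
    fibInf (Phi (k + 1) + i) = fibInf i := by
  rw [fibInf_eq_getD_fibWord (k := k + 2) (by rw [Phi_add_two]; omega),
    fibInf_eq_getD_fibWord h, fibWord,
    List.getD_append_right (fibWord (k + 1)) _ _ _ (Nat.le_add_right (Phi (k + 1)) i),
    length_fibWord, Nat.add_sub_cancel_left]

lemma fibInf_add_Phi :
    ∀ {m i : ℕ}, i + Phi m + 3 ≤ Phi (m + 2) → fibInf (i + Phi m) = fibInf i
  | 0, i, h => by simp [Phi, fibWord] at h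
  | m + 1, i, h => by
    have hm := Phi_add_two m
    have hm' : Phi (m + 1 + 2) = Phi (m + 2) + Phi (m + 1) := Phi_add_two (m + 1)
    obtain hi | hi := Nat.lt_or_ge i (Phi m)
    · rw [add_comm, fibInf_Phi_add_one_add hi]
    · obtain ⟨i, rfl⟩ := Nat.exists_eq_add_of_le' hi
      rw [fibInf_add_Phi (m := m) (by omega),
        show i + Phi m + Phi (m + 1) = Phi (m + 2) + i by omega,
        fibInf_Phi_add_one_add (by omega)]

lemma fibInf_Phi_add_one_sub_two : ∀ k, fibInf (Phi (k + 1) - 2) = decide (k % 2 = 1)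
  | 0 => rfl
  | 1 => rfl
  | k + 2 => by
    have h2 := two_le_Phi_add_one k
    have h3 : Phi (k + 2 + 1) = Phi (k + 2) + Phi (k + 1) := Phi_add_two (k + 1)
    rw [show Phi (k + 2 + 1) - 2 = Phi (k + 2) + (Phi (k + 1) - 2) by omega,
      fibInf_Phi_add_one_add (by omega), fibInf_Phi_add_one_sub_two k]
    simp

lemma exists_fibInf_add_ne {p h : ℕ} (hp : Phi h ≤ p) (hp' : p < Phi (h + 1)) :
    ∃ i, fibInf (i + p) ≠ fibInf i ∧ i + p + 2 ≤ Phi (h + 2) ∧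
      (p ≠ Phi h → i + p < Phi (h + 1) + Phi (h - 2)) := by
  induction p using Nat.strong_induction_on generalizing h with
  | _ p ih =>
  have hsucc := Phi_add_two h
  have hpred := Phi_sub_one_add h
  by_cases hph : p = Phi h
  · subst hph
    have h2 := two_le_Phi_add_one h
    refine ⟨Phi (h + 1) - 2, ?_, by omega, absurd rfl⟩
    rw [show Phi (h + 1) - 2 + Phi h = Phi (h + 2) - 2 by omega,
      fibInf_Phi_add_one_sub_two, fibInf_Phi_add_one_sub_two]
    simp [Nat.add_mod]
    omega
  · obtain ⟨r, rfl⟩ := Nat.exists_eq_add_of_le' hp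
    obtain ⟨h', hr, hr'⟩ := exists_Phi_le_lt_Phi_add_one (p := r) (by omega)
    have hh' : h' + 2 ≤ h := by
      have := Phi_strictMono.lt_iff_lt.mp (show Phi h' < Phi (h - 1) by omega)
      omega
    obtain ⟨i, hne, hi, -⟩ := ih r (by have := Phi_pos h; omega) hr hr'
    have h2 : 2 ≤ Phi (h - 1) := by
      simpa [show h - 1 = h - 2 + 1 by omega] using two_le_Phi_add_one (h - 2)
    have h3 : Phi (h' + 2) ≤ Phi h := Phi_strictMono.monotone hh'
    have h4 := two_mul_Phi_le h
    refine ⟨i, ?_, by omega, fun _ => by omega⟩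
    rwa [← add_assoc, fibInf_add_Phi (by omega)]

lemma length_fibPrefix (n : ℕ) : (fibPrefix n).length = n := by simp [fibPrefix]

lemma take_fibPrefix {j n : ℕ} (h : j ≤ n) : (fibPrefix n).take j = fibPrefix j := by
  rw [fibPrefix, ← List.map_take, List.take_range, min_eq_left h, fibPrefix]

lemma drop_fibPrefix (k n : ℕ) :
    (fibPrefix n).drop k = (List.range (n - k)).map (fun i => fibInf (i + k)) := by
  rw [fibPrefix, ← List.map_drop, List.range_eq_range', List.drop_range',
    List.range'_eq_map_range, List.map_map]
  simp [Function.comp_def, add_comm]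

lemma take_fibPrefix_suffix_iff {j n : ℕ} (h : j ≤ n) :
    (fibPrefix n).take j <:+ fibPrefix n ↔ ∀ i < j, fibInf (i + (n - j)) = fibInf i := by
  rw [take_fibPrefix h, List.suffix_iff_eq_drop, length_fibPrefix, length_fibPrefix, drop_fibPrefix,
    Nat.sub_sub_self h, fibPrefix, eq_comm, List.map_inj_left]
  simp

theorem shortBordLen_fibPrefix_Phi_add {L m s : ℕ} (hs : Phi L ≤ s) (hs' : s < Phi (L + 1))
    (hLm : L < m) (hmL : m ≤ L + 3) : shortBordLen (fibPrefix (Phi m + s)) = s := by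
  have hL := Phi_add_two L
  have hm := Phi_add_two m
  have hLm1 : Phi (L + 1) ≤ Phi m := Phi_strictMono.monotone hLm
  have hLm2 : Phi (L + 2) ≤ Phi (m + 1) := Phi_strictMono.monotone (by omega)
  have := Phi_pos L
  refine IsGreatest.csSup_eq ⟨⟨?_, by rw [length_fibPrefix]; omega⟩, ?_⟩
  · rw [take_fibPrefix_suffix_iff (by omega), Nat.add_sub_cancel]
    exact fun i hi => fibInf_add_Phi (by omega)
  rintro j ⟨hj, hj2⟩
  rw [length_fibPrefix] at hj2
  rw [take_fibPrefix_suffix_iff (by omega)] at hj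
  by_contra! hsj
  obtain ⟨h, hp, hp'⟩ := exists_Phi_le_lt_Phi_add_one (p := Phi m + s - j) (by omega)
  have hhm : h < m := Phi_strictMono.lt_iff_lt.mp (by omega)
  obtain ⟨i, hne, hi, hi'⟩ := exists_fibInf_add_ne hp hp'
  have hh2 : Phi (h - 2) ≤ Phi L := Phi_strictMono.monotone (by omega)
  have hh1 : Phi (h + 1) ≤ Phi m := Phi_strictMono.monotone hhm
  suffices i < j from hne (hj i this)
  by_cases hph : Phi m + s - j = Phi h
  · obtain h2 | rfl : h + 2 ≤ m ∨ m = h + 1 := by omega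
    · have := Phi_strictMono.monotone h2
      omega
    · have := two_mul_Phi_le h
      omega
  · have := hi' hph
    omega

lemma fibVal_lt_Phi_length : ∀ {w : List Bool},
    w.IsChain (fun a b => ¬(a = true ∧ b = true)) → fibVal w < Phi w.length
  | [], _ => Phi_pos 0
  | [true], _ => by decide
  | true :: true :: _, hw => absurd hw.rel (by simp)
  | true :: false :: u, hw => by
    have ih : fibVal u < Phi u.length := fibVal_lt_Phi_length hw.tail.tail
    have : Phi (u.length + 1 + 1) = Phi (u.length + 1) + Phi u.length := Phi_add_two _
    simp [fibVal]
    omega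
  | false :: v, hw => by
    have ih : fibVal v < Phi v.length := fibVal_lt_Phi_length hw.tail
    have : Phi v.length < Phi (v.length + 1) := Phi_strictMono (by omega)
    simp [fibVal]
    omega

/-- Lemma 3: for `n ≥ 3` with Fibonacci representation `w`, exactly one of the
following holds: `w = 101α`, `w = 1001α`, or `w = 100α` with `α` empty or
beginning with `0`; and in each case `SB[n] = (1α)_Fib`, where `SB[n]` is the
length of the longest short border of `F_∞[1..n]`. -/
theorem shortBordLen_fib_of_fibRep (n : ℕ) (hn : 3 ≤ n) (w : List Bool)
    (hw : IsFibRep n w) :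
    ((∃ α, w = [true, false, true] ++ α) ∨
     (∃ α, w = [true, false, false, true] ++ α) ∨
     (∃ α, (α = [] ∨ α.head? = some false) ∧ w = [true, false, false] ++ α)) ∧
    ¬((∃ α, w = [true, false, true] ++ α) ∧
      (∃ α, w = [true, false, false, true] ++ α)) ∧
    ¬((∃ α, w = [true, false, true] ++ α) ∧
      (∃ α, (α = [] ∨ α.head? = some false) ∧ w = [true, false, false] ++ α)) ∧
    ¬((∃ α, w = [true, false, false, true] ++ α) ∧
      (∃ α, (α = [] ∨ α.head? = some false) ∧ w = [true, false, false] ++ α)) ∧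
    (∀ α, w = [true, false, true] ++ α →
        shortBordLen (fibPrefix n) = fibVal (true :: α)) ∧
    (∀ α, w = [true, false, false, true] ++ α →
        shortBordLen (fibPrefix n) = fibVal (true :: α)) ∧
    (∀ α, (α = [] ∨ α.head? = some false) → w = [true, false, false] ++ α →
        shortBordLen (fibPrefix n) = fibVal (true :: α)) := by
  obtain ⟨hhead, hchain, rfl⟩ := hw
  replace hchain : w.IsChain (fun a b => ¬(a = true ∧ b = true)) := hchain
  have shortBordLen_eq {α : List Bool} (m : ℕ)
      (hα : (true :: α).IsChain (fun a b => ¬(a = true ∧ b = true)))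
      (hm : α.length < m ∧ m ≤ α.length + 3) (hval : fibVal w = Phi m + fibVal (true :: α)) :
      shortBordLen (fibPrefix (fibVal w)) = fibVal (true :: α) := by
    rw [hval]
    exact shortBordLen_fibPrefix_Phi_add (by simp [fibVal]) (fibVal_lt_Phi_length hα) hm.1 hm.2
  refine ⟨?_, ?_, ?_, ?_, ?_, ?_, ?_⟩
  · rcases w with _ | ⟨_ | _, _ | ⟨_ | _, _ | ⟨_ | _, _ | ⟨_ | _, α⟩⟩⟩⟩
    all_goals simp_all [fibVal, Phi, fibWord]
  · rintro ⟨⟨_, rfl⟩, _, h⟩; simp at h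
  · rintro ⟨⟨_, rfl⟩, _, _, h⟩; simp at h
  · rintro ⟨⟨β, rfl⟩, α, hα, h⟩
    obtain rfl : α = true :: β := by simpa using h.symm
    simp at hα
  · rintro α rfl
    exact shortBordLen_eq (α.length + 2) hchain.tail.tail (by omega) (by simp [fibVal])
  · rintro α rfl
    exact shortBordLen_eq (α.length + 3) hchain.tail.tail.tail (by omega) (by simp [fibVal])
  · rintro α hα rfl
    refine shortBordLen_eq (α.length + 1) ?_ (by omega) (by simp [fibVal, Phi_add_two]; ring)
    rcases α with _ | ⟨_ | _, β⟩
    · exact List.isChain_singleton _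
    · exact List.isChain_cons_cons.mpr ⟨by simp, hchain.tail.tail.tail⟩
    · simp at hα
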